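/- arXiv:2209.00714 — 2 statements merged into one kernel-verified Lean document; each statement's English description precedes it below -/
import Mathlib

section
/- Let F : ℝ^{nm × nm} → ℝ be differentiable at X = A ⊗ B (Kronecker product), where A ∈ ℝ^{n×n} and B ∈ ℝ^{m×m} are nonzero matrices. Define G : ℝ^{n×n} → ℝ by G(A₁) = F(A₁ ⊗ B). Then G is differentiable at A and for any factorization B = B_L B_R with B_L, B_R ∈ ℂ^{m×m}, the gradient satisfies ∇G(A) = Σ_{j=1}^m (I_n ⊗ e_jᵀ B_L*) ∇F(X) (I_n ⊗ B_R* e_j), where ∇ denotes the gradient with respect to the Frobenius inner product. -/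
/-!
`G` is `F` composed with the linear map `Δ ↦ Δ ⊗ₖ B`, so by the chain rule its derivative is
`LF ∘ (· ⊗ₖ B)`, and its gradient is the Frobenius adjoint of `Δ ↦ Δ ⊗ₖ B` applied to `∇F`,
namely the contraction `(k, ℓ) ↦ ∑ i i', ∇F (k, i) (ℓ, i') * B i i'`. The sandwich formula
computes the same contraction, because `∑ j, conj (B_L i j) * conj (B_R j i') = conj (B i i')`,
which is `B i i'` as `B` is real.
-/

open Matrix Kronecker

attribute [local instance] Matrix.frobeniusNormedAddCommGroup Matrix.frobeniusNormedSpace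

namespace Matrix

variable {l l' n n' : Type*}

section Derivative

variable [Fintype l] [Fintype l'] {𝕜 E : Type*} [NontriviallyNormedField 𝕜]
  [CompleteSpace 𝕜] [NormedAddCommGroup E] [NormedSpace 𝕜 E]

def kroneckerRightCLM (B : Matrix n n' 𝕜) :
    Matrix l l' 𝕜 →L[𝕜] Matrix (l × n) (l' × n') 𝕜 :=
  LinearMap.toContinuousLinearMap ((kroneckerBilinear (R := 𝕜) (α := 𝕜)).flip B)

@[simp]
theorem kroneckerRightCLM_apply (B : Matrix n n' 𝕜) (Δ : Matrix l l' 𝕜) :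
    kroneckerRightCLM B Δ = Δ ⊗ₖ B :=
  rfl

theorem _root_.HasFDerivAt.comp_kronecker_right [Fintype n] [Fintype n']
    {F : Matrix (l × n) (l' × n') 𝕜 → E}
    {LF : Matrix (l × n) (l' × n') 𝕜 →L[𝕜] E} {A : Matrix l l' 𝕜} (B : Matrix n n' 𝕜)
    (hF : HasFDerivAt F LF (A ⊗ₖ B)) :
    HasFDerivAt (fun A₁ => F (A₁ ⊗ₖ B)) (LF.comp (kroneckerRightCLM B)) A :=
  hF.comp A (kroneckerRightCLM B).hasFDerivAt

end Derivative

variable [Fintype n] [Fintype n'] {R : Type*} [CommSemiring R]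

def kroneckerContract (g : Matrix (l × n) (l' × n') R) (B : Matrix n n' R) : Matrix l l' R :=
  of fun k ℓ => ∑ i, ∑ i', g (k, i) (ℓ, i') * B i i'

theorem map_kroneckerContract {S : Type*} [CommSemiring S] (f : R →+* S)
    (g : Matrix (l × n) (l' × n') R) (B : Matrix n n' R) :
    (kroneckerContract g B).map f = kroneckerContract (g.map f) (B.map f) := by
  ext k ℓ
  simp [kroneckerContract, map_sum]

variable [Fintype l] [Fintype l']

theorem trace_transpose_mul_kronecker (g : Matrix (l × n) (l' × n') R) (Δ : Matrix l l' R)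
    (B : Matrix n n' R) :
    (gᵀ * (Δ ⊗ₖ B)).trace = ((kroneckerContract g B)ᵀ * Δ).trace := by
  simp only [trace, diag, mul_apply, transpose_apply, kronecker_apply, kroneckerContract,
    of_apply, Fintype.sum_prod_type, Finset.sum_mul]
  refine Finset.sum_congr rfl fun ℓ _ => ?_
  rw [Finset.sum_comm]
  refine Finset.sum_congr rfl fun k _ => ?_
  rw [Finset.sum_comm]
  exact Finset.sum_congr rfl fun i _ => Finset.sum_congr rfl fun i' _ => by ring

theorem one_kronecker_mul_apply {α γ : Type*} [Fintype α] [Fintype γ] [DecidableEq l]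
    (X : Matrix α n R) (M : Matrix (l × n) γ R) (k : l) (a : α) (c : γ) :
    ((1 : Matrix l l R) ⊗ₖ X * M) (k, a) c = ∑ i, X a i * M (k, i) c := by
  simp [mul_apply, one_apply, Fintype.sum_prod_type, ite_mul]

theorem mul_one_kronecker_apply {β γ : Type*} [Fintype γ] [DecidableEq l']
    (M : Matrix γ (l' × n') R) (Y : Matrix n' β R) (c : γ) (ℓ : l') (b : β) :
    (M * ((1 : Matrix l' l' R) ⊗ₖ Y)) c (ℓ, b) = ∑ i', M c (ℓ, i') * Y i' b := by
  simp [mul_apply, one_apply, Fintype.sum_prod_type, mul_ite]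

theorem sum_star_row_mul_mul_star_col_apply {p : Type*} [Fintype p] [StarRing R]
    [DecidableEq l] [DecidableEq l']
    (g : Matrix (l × n) (l' × n') R) (BL : Matrix n p R) (BR : Matrix p n' R) (k : l) (ℓ : l') :
    (∑ j, ((1 : Matrix l l R) ⊗ₖ of fun (_ : Unit) i => star (BL i j)) * g *
        ((1 : Matrix l' l' R) ⊗ₖ of fun i (_ : Unit) => star (BR j i))) (k, ()) (ℓ, ()) =
      kroneckerContract g ((BL * BR).map star) k ℓ := by
  simp only [sum_apply, mul_one_kronecker_apply, one_kronecker_mul_apply, of_apply]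
  simp only [kroneckerContract, of_apply, map_apply, mul_apply, star_sum, star_mul',
    Finset.mul_sum, Finset.sum_mul]
  rw [Finset.sum_comm_cycle]
  refine Finset.sum_congr rfl fun i _ => Finset.sum_comm.trans ?_
  exact Finset.sum_congr rfl fun i' _ => Finset.sum_congr rfl fun j _ => by ring

end Matrix

theorem stmt_6_general (n m : ℕ)
    (A : Matrix (Fin n) (Fin n) ℝ) (B : Matrix (Fin m) (Fin m) ℝ)
    (F : Matrix (Fin n × Fin m) (Fin n × Fin m) ℝ → ℝ)
    (G : Matrix (Fin n) (Fin n) ℝ → ℝ) (hG : ∀ A₁, G A₁ = F (A₁ ⊗ₖ B))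
    (LF : Matrix (Fin n × Fin m) (Fin n × Fin m) ℝ →L[ℝ] ℝ)
    (gF : Matrix (Fin n × Fin m) (Fin n × Fin m) ℝ)
    (hF : HasFDerivAt F LF (A ⊗ₖ B))
    (hgF : ∀ Δ, LF Δ = (gFᵀ * Δ).trace) :
    ∃ (LG : Matrix (Fin n) (Fin n) ℝ →L[ℝ] ℝ) (gG : Matrix (Fin n) (Fin n) ℝ),
      HasFDerivAt G LG A ∧
      (∀ Δ, LG Δ = (gGᵀ * Δ).trace) ∧
      ∀ (BL BR : Matrix (Fin m) (Fin m) ℂ), B.map (Complex.ofReal) = BL * BR →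
        ∀ k ℓ : Fin n,
          Complex.ofReal (gG k ℓ) =
            (∑ j : Fin m,
              ((1 : Matrix (Fin n) (Fin n) ℂ) ⊗ₖ
                  (Matrix.of fun (_ : Unit) (i : Fin m) => starRingEnd ℂ (BL i j))) *
                gF.map (Complex.ofReal) *
                ((1 : Matrix (Fin n) (Fin n) ℂ) ⊗ₖ
                  (Matrix.of fun (i : Fin m) (_ : Unit) => starRingEnd ℂ (BR j i))))
              (k, ()) (ℓ, ()) := by
  refine ⟨LF.comp (kroneckerRightCLM B), kroneckerContract gF B, ?_, ?_, ?_⟩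
  · rw [show G = fun A₁ => F (A₁ ⊗ₖ B) from funext hG]
    exact hF.comp_kronecker_right B
  · intro Δ
    rw [ContinuousLinearMap.comp_apply, kroneckerRightCLM_apply, hgF,
      trace_transpose_mul_kronecker]
  · intro BL BR hBLR k ℓ
    have hB_conj : (BL * BR).map star = B.map Complex.ofReal := by
      rw [← hBLR]
      ext
      simp
    simp only [starRingEnd_apply]
    rw [sum_star_row_mul_mul_star_col_apply, hB_conj]
    exact congr_fun₂ (map_kroneckerContract Complex.ofRealHom gF B) k ℓ

theorem stmt_6 (n m : ℕ)
    (A : Matrix (Fin n) (Fin n) ℝ) (B : Matrix (Fin m) (Fin m) ℝ)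
    (hA : A ≠ 0) (hB : B ≠ 0)
    (F : Matrix (Fin n × Fin m) (Fin n × Fin m) ℝ → ℝ)
    (G : Matrix (Fin n) (Fin n) ℝ → ℝ) (hG : ∀ A₁, G A₁ = F (A₁ ⊗ₖ B))
    (LF : Matrix (Fin n × Fin m) (Fin n × Fin m) ℝ →L[ℝ] ℝ)
    (gF : Matrix (Fin n × Fin m) (Fin n × Fin m) ℝ)
    (hF : HasFDerivAt F LF (A ⊗ₖ B))
    (hgF : ∀ Δ, LF Δ = (gFᵀ * Δ).trace) :
    ∃ (LG : Matrix (Fin n) (Fin n) ℝ →L[ℝ] ℝ) (gG : Matrix (Fin n) (Fin n) ℝ),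
      HasFDerivAt G LG A ∧
      (∀ Δ, LG Δ = (gGᵀ * Δ).trace) ∧
      ∀ (BL BR : Matrix (Fin m) (Fin m) ℂ), B.map (Complex.ofReal) = BL * BR →
        ∀ k ℓ : Fin n,
          Complex.ofReal (gG k ℓ) =
            (∑ j : Fin m,
              ((1 : Matrix (Fin n) (Fin n) ℂ) ⊗ₖ
                  (Matrix.of fun (_ : Unit) (i : Fin m) => starRingEnd ℂ (BL i j))) *
                gF.map (Complex.ofReal) *
                ((1 : Matrix (Fin n) (Fin n) ℂ) ⊗ₖ
                  (Matrix.of fun (i : Fin m) (_ : Unit) => starRingEnd ℂ (BR j i))))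
              (k, ()) (ℓ, ()) :=
  stmt_6_general n m A B F G hG LF gF hF hgF
end

section
/- Let A₂ = U Vᵀ with U, V ∈ ℝ^{n×n₂} of full column rank, A₁ ∈ ℝ^{n×n} invertible, and suppose Vᵀ A₁⁻¹ U is diagonalizable as T D T⁻¹ with D = diag(d₁,…,d_{n₂}) and all d_i ≠ 0. Then for all p ∈ ℝ with 1 + p·d_i ≠ 0 for all i, the matrix A₁ + p·A₂ is invertible and C (A₁ + p A₂)⁻¹ B = Φ₀ + Σ_{i=1}^{n₂} Φ_i/(p − ν_i), where Φ₀ = C A₁⁻¹ B − C A₁⁻¹ U (Vᵀ A₁⁻¹ U)⁻¹ Vᵀ A₁⁻¹ B, Φ_i = (1/d_i²) · C A₁⁻¹ U T e_i e_iᵀ T⁻¹ Vᵀ A₁⁻¹ B, and ν_i = −1/d_i. -/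
open Matrix

section Aux18

lemma aux18_cm_mul {a b c : ℕ} (X : Matrix (Fin a) (Fin b) ℝ) (Y : Matrix (Fin b) (Fin c) ℝ) :
    (X * Y).map Complex.ofReal = X.map Complex.ofReal * Y.map Complex.ofReal :=
  Matrix.map_mul (f := Complex.ofRealHom)

lemma aux18_cm_sub {a b : ℕ} (X Y : Matrix (Fin a) (Fin b) ℝ) :
    (X - Y).map Complex.ofReal = X.map Complex.ofReal - Y.map Complex.ofReal := by
  ext i j; simp

lemma aux18_cm_smul {a b : ℕ} (r : ℝ) (X : Matrix (Fin a) (Fin b) ℝ) :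
    (r • X).map Complex.ofReal = (r : ℂ) • X.map Complex.ofReal := by
  ext i j; simp

lemma aux18_cm_one {a : ℕ} :
    (1 : Matrix (Fin a) (Fin a) ℝ).map Complex.ofReal = 1 := by
  ext i j; by_cases h : i = j <;> simp [Matrix.one_apply, h]

lemma aux18_cm_inv {a : ℕ} (X : Matrix (Fin a) (Fin a) ℝ) (h : IsUnit X) :
    (X⁻¹).map Complex.ofReal = (X.map Complex.ofReal)⁻¹ := by
  symm
  apply Matrix.inv_eq_right_inv
  rw [← aux18_cm_mul, Matrix.mul_nonsing_inv X ((Matrix.isUnit_iff_isUnit_det X).mp h),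
    aux18_cm_one]

lemma aux18_diag_sum {a : ℕ} (v : Fin a → ℂ) :
    Matrix.diagonal v = ∑ i, v i • Matrix.single i i (1:ℂ) := by
  ext x y
  rw [Matrix.sum_apply]
  by_cases h : x = y
  · subst h
    simp [Matrix.single, Matrix.diagonal]
  · rw [Finset.sum_eq_zero]
    · simp [Matrix.diagonal, h]
    · intro i _
      simp only [Matrix.smul_apply, Matrix.single, Matrix.of_apply, smul_ite, smul_zero]
      rw [if_neg]
      rintro ⟨rfl, rfl⟩
      exact h rfl

lemma aux18_conj_det_ne {a : ℕ} (T : Matrix (Fin a) (Fin a) ℂ) (hT : IsUnit T)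
    (v : Fin a → ℂ) (hv : ∀ i, v i ≠ 0) :
    (T * Matrix.diagonal v * T⁻¹).det ≠ 0 := by
  have hTT : T * T⁻¹ = 1 := Matrix.mul_nonsing_inv T ((Matrix.isUnit_iff_isUnit_det T).mp hT)
  have : (T * Matrix.diagonal v * T⁻¹).det = (∏ i, v i) * (T * T⁻¹).det := by
    rw [Matrix.det_mul, Matrix.det_mul, Matrix.det_mul, Matrix.det_diagonal]
    ring
  rw [this, hTT, Matrix.det_one, mul_one]
  exact Finset.prod_ne_zero_iff.mpr (fun i _ => hv i)

lemma aux18_isUnit_of_conj {a : ℕ} (X : Matrix (Fin a) (Fin a) ℝ)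
    (T : Matrix (Fin a) (Fin a) ℂ) (hT : IsUnit T)
    (v : Fin a → ℂ) (hv : ∀ i, v i ≠ 0)
    (h : X.map Complex.ofReal = T * Matrix.diagonal v * T⁻¹) : IsUnit X := by
  rw [Matrix.isUnit_iff_isUnit_det, isUnit_iff_ne_zero]
  intro h0
  apply aux18_conj_det_ne T hT v hv
  have h2 : ((X.det : ℝ) : ℂ) = (X.map Complex.ofReal).det := by
    exact RingHom.map_det Complex.ofRealHom X
  rw [← h, ← h2, h0, Complex.ofReal_zero]

lemma aux18_conj_inv {a : ℕ} (T : Matrix (Fin a) (Fin a) ℂ) (hT : IsUnit T)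
    (v : Fin a → ℂ) (hv : ∀ i, v i ≠ 0) :
    (T * Matrix.diagonal v * T⁻¹)⁻¹ = T * Matrix.diagonal (fun i => (v i)⁻¹) * T⁻¹ := by
  have hTT : T * T⁻¹ = 1 := Matrix.mul_nonsing_inv T ((Matrix.isUnit_iff_isUnit_det T).mp hT)
  have hTT' : T⁻¹ * T = 1 := Matrix.nonsing_inv_mul T ((Matrix.isUnit_iff_isUnit_det T).mp hT)
  apply Matrix.inv_eq_right_inv
  calc T * Matrix.diagonal v * T⁻¹ * (T * Matrix.diagonal (fun i => (v i)⁻¹) * T⁻¹)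
      = T * (Matrix.diagonal v * ((T⁻¹ * T) * Matrix.diagonal (fun i => (v i)⁻¹))) * T⁻¹ := by
        simp only [Matrix.mul_assoc]
    _ = T * T⁻¹ := by
        rw [hTT', Matrix.one_mul, Matrix.diagonal_mul_diagonal,
          show (fun i => v i * (v i)⁻¹) = fun _ => (1:ℂ) from
            funext fun i => mul_inv_cancel₀ (hv i),
          Matrix.diagonal_one, Matrix.mul_one]
    _ = 1 := hTT

end Aux18

theorem stmt_18 (n n₂ ni no : ℕ)
    (A₁ : Matrix (Fin n) (Fin n) ℝ) (U V : Matrix (Fin n) (Fin n₂) ℝ)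
    (C : Matrix (Fin no) (Fin n) ℝ) (B : Matrix (Fin n) (Fin ni) ℝ)
    (hA₁ : IsUnit A₁) (hU : U.rank = n₂) (hV : V.rank = n₂)
    (T : Matrix (Fin n₂) (Fin n₂) ℂ) (hT : IsUnit T)
    (d : Fin n₂ → ℂ) (hd : ∀ i, d i ≠ 0)
    (hdiag : (Vᵀ * A₁⁻¹ * U).map (Complex.ofReal) = T * Matrix.diagonal d * T⁻¹)
    (p : ℝ) (hp : ∀ i, (1 : ℂ) + (p : ℂ) * d i ≠ 0) :
    IsUnit (A₁ + p • (U * Vᵀ)) ∧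
    (C * (A₁ + p • (U * Vᵀ))⁻¹ * B).map (Complex.ofReal) =
      (C * A₁⁻¹ * B - C * A₁⁻¹ * U * (Vᵀ * A₁⁻¹ * U)⁻¹ * Vᵀ * A₁⁻¹ * B).map
          (Complex.ofReal) +
      ∑ i : Fin n₂, ((p : ℂ) - (-(d i)⁻¹))⁻¹ •
        ((d i ^ 2)⁻¹ •
          ((C * A₁⁻¹ * U).map (Complex.ofReal) * T * Matrix.single i i (1 : ℂ) * T⁻¹ *
            (Vᵀ * A₁⁻¹ * B).map (Complex.ofReal))) := by
  have hA₁det := (Matrix.isUnit_iff_isUnit_det A₁).mp hA₁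
  have hA₁r : A₁ * A₁⁻¹ = 1 := Matrix.mul_nonsing_inv A₁ hA₁det
  set M : Matrix (Fin n₂) (Fin n₂) ℝ := Vᵀ * A₁⁻¹ * U with hMdef
  set K : Matrix (Fin n₂) (Fin n₂) ℝ := 1 + p • M with hKdef
  -- complexification of K
  have hKc : K.map Complex.ofReal = T * Matrix.diagonal (fun i => 1 + (p:ℂ) * d i) * T⁻¹ := by
    have hTT : T * T⁻¹ = 1 := Matrix.mul_nonsing_inv T ((Matrix.isUnit_iff_isUnit_det T).mp hT)
    have h1 : Matrix.diagonal (fun i => 1 + (p:ℂ) * d i)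
        = 1 + (p:ℂ) • Matrix.diagonal d := by
      ext i j
      by_cases h : i = j
      · subst h; simp [Matrix.diagonal, Matrix.one_apply]
      · simp [Matrix.diagonal, Matrix.one_apply, h]
    have hmap : K.map Complex.ofReal = 1 + (p:ℂ) • ((Vᵀ * A₁⁻¹ * U).map Complex.ofReal) := by
      ext i j
      by_cases h : i = j <;>
        simp [hKdef, hMdef, Matrix.one_apply, Matrix.add_apply, Matrix.smul_apply, h]
    rw [hmap, hdiag, h1]
    rw [Matrix.mul_add, Matrix.add_mul, Matrix.mul_one, hTT]
    rw [Matrix.mul_smul, Matrix.smul_mul]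
  -- K is a unit
  have hK : IsUnit K := aux18_isUnit_of_conj K T hT _ hp hKc
  have hKdet := (Matrix.isUnit_iff_isUnit_det K).mp hK
  -- M is a unit
  have hM : IsUnit M := aux18_isUnit_of_conj M T hT d hd hdiag
  -- invertibility of A₁ + p • (U * Vᵀ)
  have hfact : A₁ + p • (U * Vᵀ) = A₁ * (1 + (p • (A₁⁻¹ * U)) * Vᵀ) := by
    rw [Matrix.mul_add, Matrix.mul_one, Matrix.smul_mul, Matrix.mul_smul]
    congr 1
    rw [← Matrix.mul_assoc, ← Matrix.mul_assoc, hA₁r, Matrix.one_mul]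
  have hdet : (A₁ + p • (U * Vᵀ)).det = A₁.det * K.det := by
    rw [hfact, Matrix.det_mul, Matrix.det_one_add_mul_comm]
    congr 2
    rw [hKdef, hMdef, Matrix.mul_smul, Matrix.mul_assoc]
  have hunit : IsUnit (A₁ + p • (U * Vᵀ)) := by
    rw [Matrix.isUnit_iff_isUnit_det, hdet]
    exact hA₁det.mul hKdet
  refine ⟨hunit, ?_⟩
  -- Woodbury
  have hwood : (A₁ + p • (U * Vᵀ))⁻¹
      = A₁⁻¹ - A₁⁻¹ * (p • U) * K⁻¹ * Vᵀ * A₁⁻¹ := by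
    have h1 : A₁ + p • (U * Vᵀ) = A₁ + (p • U) * (1 : Matrix (Fin n₂) (Fin n₂) ℝ) * Vᵀ := by
      rw [Matrix.mul_one, Matrix.smul_mul]
    have h2 : IsUnit ((1 : Matrix (Fin n₂) (Fin n₂) ℝ)⁻¹ + Vᵀ * A₁⁻¹ * (p • U)) := by
      rwa [inv_one, show Vᵀ * A₁⁻¹ * (p • U) = p • M from by rw [Matrix.mul_smul], ← hKdef]
    rw [h1, Matrix.add_mul_mul_inv_eq_sub A₁ (p • U) 1 Vᵀ hA₁ isUnit_one h2]
    congr 3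
    rw [inv_one, show Vᵀ * A₁⁻¹ * (p • U) = p • M from by rw [Matrix.mul_smul], ← hKdef]
  -- expand C * inv * B
  have hexp : C * (A₁ + p • (U * Vᵀ))⁻¹ * B
      = C * A₁⁻¹ * B - p • ((C * A₁⁻¹ * U) * K⁻¹ * (Vᵀ * A₁⁻¹ * B)) := by
    rw [hwood, Matrix.mul_sub, Matrix.sub_mul]
    congr 1
    simp only [Matrix.mul_smul, Matrix.smul_mul, Matrix.mul_assoc]
  -- complexified pieces
  set R : Matrix (Fin no) (Fin n₂) ℂ := (C * A₁⁻¹ * U).map Complex.ofReal with hRdef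
  set L : Matrix (Fin n₂) (Fin ni) ℂ := (Vᵀ * A₁⁻¹ * B).map Complex.ofReal with hLdef
  have hKinv : (K⁻¹).map Complex.ofReal
      = T * Matrix.diagonal (fun i => (1 + (p:ℂ) * d i)⁻¹) * T⁻¹ := by
    rw [aux18_cm_inv K hK, hKc, aux18_conj_inv T hT _ hp]
  have hMinv : (M⁻¹).map Complex.ofReal
      = T * Matrix.diagonal (fun i => (d i)⁻¹) * T⁻¹ := by
    rw [aux18_cm_inv M hM, hdiag, aux18_conj_inv T hT d hd]
  -- LHS computed
  have hLHS : (C * (A₁ + p • (U * Vᵀ))⁻¹ * B).map Complex.ofReal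
      = (C * A₁⁻¹ * B).map Complex.ofReal
        - (p:ℂ) • (R * (T * Matrix.diagonal (fun i => (1 + (p:ℂ) * d i)⁻¹) * T⁻¹) * L) := by
    rw [hexp, aux18_cm_sub, aux18_cm_smul,
      aux18_cm_mul (C * A₁⁻¹ * U * K⁻¹) (Vᵀ * A₁⁻¹ * B),
      aux18_cm_mul (C * A₁⁻¹ * U) K⁻¹, hKinv, hRdef, hLdef]
  rw [hLHS]
  -- constant term
  have hconst : (C * A₁⁻¹ * B - C * A₁⁻¹ * U * M⁻¹ * Vᵀ * A₁⁻¹ * B).map Complex.ofReal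
      = (C * A₁⁻¹ * B).map Complex.ofReal
        - R * (T * Matrix.diagonal (fun i => (d i)⁻¹) * T⁻¹) * L := by
    rw [aux18_cm_sub]
    congr 1
    rw [show C * A₁⁻¹ * U * M⁻¹ * Vᵀ * A₁⁻¹ * B = (C * A₁⁻¹ * U) * M⁻¹ * (Vᵀ * A₁⁻¹ * B) from by
      simp only [Matrix.mul_assoc], aux18_cm_mul, aux18_cm_mul, hMinv, hRdef, hLdef]
  rw [hconst]
  -- the sum
  have hsum : (∑ i : Fin n₂, ((p : ℂ) - (-(d i)⁻¹))⁻¹ •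
        ((d i ^ 2)⁻¹ • (R * T * Matrix.single i i (1 : ℂ) * T⁻¹ * L)))
      = R * (T * Matrix.diagonal (fun i => (d i)⁻¹ * (1 + (p:ℂ) * d i)⁻¹) * T⁻¹) * L := by
    have hcoef : ∀ i, ((p : ℂ) - (-(d i)⁻¹))⁻¹ * (d i ^ 2)⁻¹
        = (d i)⁻¹ * (1 + (p:ℂ) * d i)⁻¹ := by
      intro i
      rw [sub_neg_eq_add, ← mul_inv, ← mul_inv]
      congr 1
      have h2 : ((p:ℂ) + (d i)⁻¹) * d i = 1 + (p:ℂ) * d i := by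
        rw [add_mul, inv_mul_cancel₀ (hd i)]; ring
      calc ((p:ℂ) + (d i)⁻¹) * d i ^ 2 = (((p:ℂ) + (d i)⁻¹) * d i) * d i := by ring
        _ = (1 + (p:ℂ) * d i) * d i := by rw [h2]
        _ = d i * (1 + (p:ℂ) * d i) := by ring
    calc (∑ i : Fin n₂, ((p : ℂ) - (-(d i)⁻¹))⁻¹ •
          ((d i ^ 2)⁻¹ • (R * T * Matrix.single i i (1 : ℂ) * T⁻¹ * L)))
        = ∑ i : Fin n₂, R * T * (((d i)⁻¹ * (1 + (p:ℂ) * d i)⁻¹) •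
            Matrix.single i i (1 : ℂ)) * T⁻¹ * L := by
          refine Finset.sum_congr rfl fun i _ => ?_
          rw [smul_smul, hcoef i]
          simp only [Matrix.smul_mul, Matrix.mul_smul]
      _ = R * T * (∑ i : Fin n₂, ((d i)⁻¹ * (1 + (p:ℂ) * d i)⁻¹) •
            Matrix.single i i (1 : ℂ)) * T⁻¹ * L := by
          rw [← Matrix.sum_mul, ← Matrix.sum_mul, ← Matrix.mul_sum]
      _ = R * (T * Matrix.diagonal (fun i => (d i)⁻¹ * (1 + (p:ℂ) * d i)⁻¹) * T⁻¹) * L := by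
          rw [← aux18_diag_sum]
          simp only [Matrix.mul_assoc]
  rw [hsum]
  -- final algebraic identity
  have hdiagid : Matrix.diagonal (fun i => (d i)⁻¹)
      = (p:ℂ) • Matrix.diagonal (fun i => (1 + (p:ℂ) * d i)⁻¹)
        + Matrix.diagonal (fun i => (d i)⁻¹ * (1 + (p:ℂ) * d i)⁻¹) := by
    ext i j
    by_cases h : i = j
    · subst h
      simp only [Matrix.diagonal_apply_eq, Matrix.add_apply, Matrix.smul_apply, smul_eq_mul]
      have hstep : (p:ℂ) * (1 + (p:ℂ) * d i)⁻¹ + (d i)⁻¹ * (1 + (p:ℂ) * d i)⁻¹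
          = ((p:ℂ) + (d i)⁻¹) * (1 + (p:ℂ) * d i)⁻¹ := by ring
      rw [hstep]
      have h2 : (p:ℂ) + (d i)⁻¹ = (d i)⁻¹ * (1 + (p:ℂ) * d i) := by
        rw [mul_add, mul_one, mul_comm ((d i)⁻¹) ((p:ℂ) * d i), mul_assoc,
          mul_inv_cancel₀ (hd i), mul_one, add_comm]
      rw [h2, mul_assoc, mul_inv_cancel₀ (hp i), mul_one]
    · simp [Matrix.diagonal, h]
  have hexpand : R * (T * Matrix.diagonal (fun i => (d i)⁻¹) * T⁻¹) * L
      = (p:ℂ) • (R * (T * Matrix.diagonal (fun i => (1 + (p:ℂ) * d i)⁻¹) * T⁻¹) * L)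
        + R * (T * Matrix.diagonal (fun i => (d i)⁻¹ * (1 + (p:ℂ) * d i)⁻¹) * T⁻¹) * L := by
    rw [hdiagid]
    simp only [Matrix.mul_add, Matrix.add_mul, Matrix.mul_smul, Matrix.smul_mul]
  rw [hexpand]
  abel
end
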